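/- In the layer-product popping process, if (u',v') is a layer product whose minimum tuple has been popped but whose maximum tuple has not been popped by the end of phase 1, then u' = 1, or v' = 1, or the maximum tuple ⌈(u'−1,v'−1)⌉ was popped during phase 1. -/

import Mathlib

/-- A tuple in the priority queue: (value, layer-product index (u,v), isMax flag). -/
abbrev Tup := ℝ × (ℕ × ℕ) × Bool

/-- Lexicographic order on index pairs. -/
def idxLt (a b : ℕ × ℕ) : Prop := a.1 < b.1 ∨ (a.1 = b.1 ∧ a.2 < b.2)

/-- Lexicographic order on tuples (value, index, flag), with false < true. -/
def tupLt (a b : Tup) : Prop :=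
  a.1 < b.1 ∨ (a.1 = b.1 ∧ (idxLt a.2.1 b.2.1 ∨ (a.2.1 = b.2.1 ∧ a.2.2 < b.2.2)))

/-- ⌊(u,v)⌋ : the minimum tuple of layer product (u,v). -/
def floorT (lo : ℕ × ℕ → ℝ) (uv : ℕ × ℕ) : Tup := (lo uv, uv, false)

/-- ⌈(u,v)⌉ : the maximum tuple of layer product (u,v). -/
def ceilT (hi : ℕ × ℕ → ℝ) (uv : ℕ × ℕ) : Tup := (hi uv, uv, true)

/-- Tuples inserted when a tuple is popped: popping ⌊(u,v)⌋ inserts ⌈(u,v)⌉,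
⌊(u+1,v)⌋ and ⌊(u,v+1)⌋ (when in range 1..p × 1..q); popping ⌈(u,v)⌉ inserts
nothing. -/
noncomputable def succs (p q : ℕ) (lo hi : ℕ × ℕ → ℝ) (t : Tup) : Finset Tup :=
  if t.2.2 = true then ∅
  else
    {ceilT hi t.2.1}
      ∪ (if t.2.1.1 + 1 ≤ p then {floorT lo (t.2.1.1 + 1, t.2.1.2)} else ∅)
      ∪ (if t.2.1.2 + 1 ≤ q then {floorT lo (t.2.1.1, t.2.1.2 + 1)} else ∅)

/-- A run of the layer-product popping process: `H t` is the heap content before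
the `t`-th pop, `pop t` is the tuple popped at time `t`, and `N` is the number of
pops performed.  The heap starts with ⌊(1,1)⌋, each pop removes a minimum tuple
and inserts its successors, avoiding duplicates of already-popped tuples. -/
structure Run (p q : ℕ) (lo hi : ℕ × ℕ → ℝ) where
  N : ℕ
  H : ℕ → Finset Tup
  pop : ℕ → Tup
  init : H 0 = {floorT lo (1, 1)}
  mem : ∀ t < N, pop t ∈ H t
  isMin : ∀ t < N, ∀ x ∈ H t, ¬ tupLt x (pop t)
  step : ∀ t < N, H (t + 1) =
    ((H t).erase (pop t)) ∪
      ((succs p q lo hi (pop t)) \ ((Finset.range (t + 1)).image pop))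

/-!
A heap pops its contents in increasing order, so a tuple that is smaller than the popped
⌊(u',v')⌋ and was inserted no later must already have been popped. Every ⌊(a,b)⌋ with
(1,1) ≤ (a,b) < (u',v') componentwise is smaller than ⌊(u',v')⌋ and is inserted by popping
a componentwise smaller floor, so by well-founded induction from ⌊(1,1)⌋ all of them are popped
before ⌊(u',v')⌋. Popping ⌊(u'−1,v'−1)⌋ inserts ⌈(u'−1,v'−1)⌉, and the layer order gives
⌈(u'−1,v'−1)⌉ < ⌊(u',v')⌋, so it is popped before ⌊(u',v')⌋ as well.
-/

section LayerOrdered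

variable {ι α : Type*} [PartialOrder ι] [LinearOrder α]

def LayerOrdered (X : ι → Finset α) : Prop :=
  ∀ u v, u < v → ∀ a ∈ X u, ∀ b ∈ X v, a ≤ b

lemma LayerOrdered.max'_le_min' {X : ι → Finset α} (hX : LayerOrdered X)
    (hne : ∀ u, (X u).Nonempty) {u v : ι} (huv : u < v) :
    (X u).max' (hne u) ≤ (X v).min' (hne v) :=
  hX u v huv _ (Finset.max'_mem _ _) _ (Finset.min'_mem _ _)

lemma LayerOrdered.monotone_min' {X : ι → Finset α} (hX : LayerOrdered X)
    (hne : ∀ u, (X u).Nonempty) : Monotone fun u => (X u).min' (hne u) := by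
  intro u v huv
  rcases huv.lt_or_eq with h | rfl
  · exact hX u v h _ (Finset.min'_mem _ _) _ (Finset.min'_mem _ _)
  · rfl

end LayerOrdered

lemma idxLt_of_lt {a b : ℕ × ℕ} (h : a < b) : idxLt a b := by
  rw [Prod.lt_iff] at h
  unfold idxLt
  omega

lemma tupLt_of_le_of_idxLt {x y : Tup} (hle : x.1 ≤ y.1) (hidx : idxLt x.2.1 y.2.1) :
    tupLt x y :=
  hle.lt_or_eq.imp id fun h => ⟨h, Or.inl hidx⟩

section Succs

variable {p q : ℕ} {lo hi : ℕ × ℕ → ℝ}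

lemma ceilT_mem_succs_floorT (c : ℕ × ℕ) : ceilT hi c ∈ succs p q lo hi (floorT lo c) := by
  simp [succs, floorT]

lemma exists_floorT_mem_succs_floorT {ab : ℕ × ℕ} (h1 : (1, 1) ≤ ab) (hne : ab ≠ (1, 1))
    (hpq : ab ≤ (p, q)) :
    ∃ c, (1, 1) ≤ c ∧ c < ab ∧ floorT lo ab ∈ succs p q lo hi (floorT lo c) := by
  obtain ⟨a, b⟩ := ab
  simp only [Prod.mk_le_mk, ne_eq, Prod.mk.injEq] at h1 hne hpq
  by_cases ha : 2 ≤ a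
  · refine ⟨(a - 1, b), ?_, ?_, ?_⟩
    · simp only [Prod.mk_le_mk]; omega
    · simp only [Prod.lt_iff]; omega
    · have : a - 1 + 1 = a := by omega
      simp [succs, floorT, this, hpq.1]
  · refine ⟨(a, b - 1), ?_, ?_, ?_⟩
    · simp only [Prod.mk_le_mk]; omega
    · simp only [Prod.lt_iff]; omega
    · have : b - 1 + 1 = b := by omega
      simp [succs, floorT, this, hpq.2]

lemma index_mem_Icc_of_mem_succs {x y : Tup} (hy : y.2.1 ∈ Set.Icc (1, 1) (p, q))
    (hx : x ∈ succs p q lo hi y) : x.2.1 ∈ Set.Icc (1, 1) (p, q) := by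
  obtain ⟨v, ⟨a, b⟩, _ | _⟩ := y
  · simp only [Set.mem_Icc, Prod.mk_le_mk] at hy
    simp only [succs, floorT, ceilT, Bool.false_eq_true, if_false] at hx
    split_ifs at hx <;> simp only [Finset.mem_union, Finset.mem_singleton,
      Finset.notMem_empty, or_false] at hx <;> rcases hx with (rfl | rfl) | rfl <;>
      simp only [Set.mem_Icc, Prod.mk_le_mk] <;> omega
  · simp [succs] at hx

end Succs

namespace Run

variable {p q : ℕ} {lo hi : ℕ × ℕ → ℝ} (r : Run p q lo hi)

lemma popped_or_mem_of_mem {s t : ℕ} (hst : s ≤ t) (ht : t ≤ r.N) {x : Tup} (hx : x ∈ r.H s) :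
    (∃ s' ∈ Set.Ico s t, r.pop s' = x) ∨ x ∈ r.H t := by
  induction t, hst using Nat.le_induction with
  | base => exact Or.inr hx
  | succ n hsn ih =>
    rcases ih (by omega) with ⟨s', hs', hpop⟩ | hmem
    · exact Or.inl ⟨s', Set.Ico_subset_Ico_right n.le_succ hs', hpop⟩
    · by_cases hpop : r.pop n = x
      · exact Or.inl ⟨n, ⟨hsn, by omega⟩, hpop⟩
      · rw [r.step n (by omega)]
        exact Or.inr (Finset.mem_union_left _ (Finset.mem_erase.2 ⟨Ne.symm hpop, hmem⟩))

lemma index_mem_Icc (hp : 1 ≤ p) (hq : 1 ≤ q) {t : ℕ} (ht : t ≤ r.N) {x : Tup}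
    (hx : x ∈ r.H t) : x.2.1 ∈ Set.Icc (1, 1) (p, q) := by
  induction t generalizing x with
  | zero =>
    rw [r.init, Finset.mem_singleton] at hx
    subst hx
    exact ⟨le_rfl, Prod.mk_le_mk.2 ⟨hp, hq⟩⟩
  | succ n ih =>
    rw [r.step n (by omega), Finset.mem_union, Finset.mem_sdiff, Finset.mem_erase] at hx
    rcases hx with ⟨_, hx⟩ | ⟨hx, _⟩
    · exact ih (by omega) hx
    · exact index_mem_Icc_of_mem_succs (ih (by omega) (r.mem n (by omega))) hx

lemma popped_or_mem_succ_of_mem_succs {s : ℕ} (hs : s < r.N) {x : Tup}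
    (hx : x ∈ succs p q lo hi (r.pop s)) : (∃ s' ≤ s, r.pop s' = x) ∨ x ∈ r.H (s + 1) := by
  by_cases hpopped : x ∈ (Finset.range (s + 1)).image r.pop
  · obtain ⟨s', hs', hpop⟩ := Finset.mem_image.1 hpopped
    exact Or.inl ⟨s', Nat.lt_succ_iff.1 (Finset.mem_range.1 hs'), hpop⟩
  · rw [r.step s hs]
    exact Or.inr (Finset.mem_union_right _ (Finset.mem_sdiff.2 ⟨hx, hpopped⟩))

lemma popped_before_of_mem_of_tupLt {t s : ℕ} (ht : t < r.N) (hst : s ≤ t) {x : Tup}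
    (hx : x ∈ r.H s) (hlt : tupLt x (r.pop t)) : ∃ s' < t, r.pop s' = x := by
  rcases r.popped_or_mem_of_mem hst ht.le hx with ⟨s', hs', hpop⟩ | hmem
  · exact ⟨s', hs'.2, hpop⟩
  · exact absurd hlt (r.isMin t ht x hmem)

lemma popped_before_of_mem_succs_of_tupLt {t s : ℕ} (ht : t < r.N) (hst : s < t) {x : Tup}
    (hx : x ∈ succs p q lo hi (r.pop s)) (hlt : tupLt x (r.pop t)) :
    ∃ s' < t, r.pop s' = x := by
  rcases r.popped_or_mem_succ_of_mem_succs (hst.trans ht) hx with ⟨s', hs', hpop⟩ | hmem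
  · exact ⟨s', hs'.trans_lt hst, hpop⟩
  · exact r.popped_before_of_mem_of_tupLt ht hst hmem hlt

lemma floorT_popped_before (hp : 1 ≤ p) (hq : 1 ≤ q) (hlo : Monotone lo) {t : ℕ}
    (ht : t < r.N) {uv : ℕ × ℕ} (hpop : r.pop t = floorT lo uv) {ab : ℕ × ℕ}
    (hab : ab ∈ Set.Ico (1, 1) uv) : ∃ s < t, r.pop s = floorT lo ab := by
  have huv : uv ≤ (p, q) := (hpop ▸ r.index_mem_Icc hp hq ht.le (r.mem t ht)).2
  induction ab using WellFoundedLT.induction with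
  | _ ab ih =>
    have hlt : tupLt (floorT lo ab) (r.pop t) :=
      hpop ▸ tupLt_of_le_of_idxLt (hlo hab.2.le) (idxLt_of_lt hab.2)
    by_cases h11 : ab = (1, 1)
    · subst h11
      exact r.popped_before_of_mem_of_tupLt ht (Nat.zero_le t) (by simp [r.init]) hlt
    · obtain ⟨c, hc1, hcab, hsucc⟩ :=
        exists_floorT_mem_succs_floorT (hi := hi) hab.1 h11 (hab.2.le.trans huv)
      obtain ⟨s, hst, hs⟩ := ih c hcab ⟨hc1, hcab.trans hab.2⟩
      exact r.popped_before_of_mem_succs_of_tupLt ht hst (hs ▸ hsucc) hlt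

end Run

theorem pending_max_has_diag_predecessor_general (p q : ℕ) (hp : 1 ≤ p) (hq : 1 ≤ q)
    (X Y : ℕ → Finset ℝ)
    (hXne : ∀ u, (X u).Nonempty) (hYne : ∀ v, (Y v).Nonempty)
    (hXord : ∀ u v, u < v → ∀ a ∈ X u, ∀ b ∈ X v, a ≤ b)
    (hYord : ∀ u v, u < v → ∀ a ∈ Y u, ∀ b ∈ Y v, a ≤ b)
    (lo hi : ℕ × ℕ → ℝ)
    (hlo : ∀ uv : ℕ × ℕ, lo uv = (X uv.1).min' (hXne uv.1) + (Y uv.2).min' (hYne uv.2))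
    (hhi : ∀ uv : ℕ × ℕ, hi uv = (X uv.1).max' (hXne uv.1) + (Y uv.2).max' (hYne uv.2))
    (r : Run p q lo hi) (N1 : ℕ) (hN1 : N1 ≤ r.N) (u' v' : ℕ)
    (hmin : ∃ t < N1, r.pop t = floorT lo (u', v')) :
    u' = 1 ∨ v' = 1 ∨ ∃ t < N1, r.pop t = ceilT hi (u' - 1, v' - 1) := by
  by_cases hu : u' = 1
  · exact Or.inl hu
  by_cases hv : v' = 1
  · exact Or.inr (Or.inl hv)
  obtain ⟨t, htN1, hpop⟩ := hmin
  have ht : t < r.N := htN1.trans_le hN1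
  have hlo_mono : Monotone lo := fun a b hab => by
    rw [hlo, hlo]
    exact add_le_add (LayerOrdered.monotone_min' hXord hXne hab.1)
      (LayerOrdered.monotone_min' hYord hYne hab.2)
  have hpos := Prod.mk_le_mk.1 (hpop ▸ r.index_mem_Icc hp hq ht.le (r.mem t ht)).1
  have hdiag : (u' - 1, v' - 1) ∈ Set.Ico (1, 1) (u', v') := by
    simp only [Set.mem_Ico, Prod.mk_le_mk, Prod.lt_iff]
    omega
  have hceil_lt : tupLt (ceilT hi (u' - 1, v' - 1)) (r.pop t) := by
    rw [hpop]
    refine tupLt_of_le_of_idxLt ?_ (idxLt_of_lt hdiag.2)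
    simp only [ceilT, floorT, hhi, hlo]
    exact add_le_add (LayerOrdered.max'_le_min' hXord hXne (by omega))
      (LayerOrdered.max'_le_min' hYord hYne (by omega))
  obtain ⟨s, hst, hs⟩ := r.floorT_popped_before hp hq hlo_mono ht hpop hdiag
  obtain ⟨s', hs't, hs'⟩ :=
    r.popped_before_of_mem_succs_of_tupLt ht hst (hs ▸ ceilT_mem_succs_floorT _) hceil_lt
  exact Or.inr (Or.inr ⟨s', hs't.trans htN1, hs'⟩)

/-- If by the end of phase 1 (time N1) the minimum tuple of layer
product (u',v') has been popped but its maximum tuple has not, then u' = 1, or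
v' = 1, or the maximum tuple ⌈(u'−1,v'−1)⌉ was popped during phase 1. -/
theorem pending_max_has_diag_predecessor (p q : ℕ) (hp : 1 ≤ p) (hq : 1 ≤ q)
    (X Y : ℕ → Finset ℝ)
    (hXne : ∀ u, (X u).Nonempty) (hYne : ∀ v, (Y v).Nonempty)
    (hXord : ∀ u v, u < v → ∀ a ∈ X u, ∀ b ∈ X v, a ≤ b)
    (hYord : ∀ u v, u < v → ∀ a ∈ Y u, ∀ b ∈ Y v, a ≤ b)
    (lo hi : ℕ × ℕ → ℝ)
    (hlo : ∀ uv : ℕ × ℕ, lo uv = (X uv.1).min' (hXne uv.1) + (Y uv.2).min' (hYne uv.2))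
    (hhi : ∀ uv : ℕ × ℕ, hi uv = (X uv.1).max' (hXne uv.1) + (Y uv.2).max' (hYne uv.2))
    (r : Run p q lo hi) (N1 : ℕ) (hN1 : N1 ≤ r.N) (u' v' : ℕ)
    (hmin : ∃ t < N1, r.pop t = floorT lo (u', v'))
    (hmax : ¬ ∃ t < N1, r.pop t = ceilT hi (u', v')) :
    u' = 1 ∨ v' = 1 ∨ ∃ t < N1, r.pop t = ceilT hi (u' - 1, v' - 1) :=
  pending_max_has_diag_predecessor_general p q hp hq X Y hXne hYne hXord hYord lo hi hlo hhi r N1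
    hN1 u' v' hmin
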